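/- Let τ = (1-√5)/2, 0 ≤ λ ≤ 1, and suppose f(z) = z + a₂z² + a₃z³ + … is bi-univalent with (zf'(z)+λz²f''(z))/((1-λ)f(z)+λzf'(z)) ≺ p̃(z) and the analogous subordination for g = f⁻¹, where p̃(z) = (1+τ²z²)/(1-τz-τ²z²). Then |a₂| ≤ |τ|/√((1+λ)² - 2τ(2λ²+2λ+1)) and |a₃| ≤ |τ|(1-4τ)(1+λ)² / (2(1+2λ)[(1+λ)² - 2τ(2λ²+2λ+1)]). -/

import Mathlib

/-!
Write `a₂, a₃` for the second and third Taylor coefficients of `f`. Comparing coefficients in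
`z f' + λ z² f'' = ((1 - λ) f + λ z f') · p̃(w)`, where `p̃(z) = 1 + τ z + 3 τ² z² + ⋯` and
`w = b₁ z + b₂ z² + ⋯` is the Schwarz function, gives `(1 + λ) a₂ = τ b₁` and
`2 (1 + 2λ) a₃ = 4 τ² b₁² + τ b₂`. The inverse `g` has coefficients `-a₂` and `2 a₂² - a₃`, so
the same relations hold for these with a second Schwarz function `c₁ z + c₂ z² + ⋯`.

Adding the two third-order relations eliminates `a₃`: `-4 (2λ² + 2λ + 1) a₂² = τ (b₂ + c₂)`.
With `|b₂| ≤ 1 - |b₁|²` (Schwarz–Pick applied to `w(z)/z`) and `|τ b₁| = (1 + λ) |a₂|` this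
bounds `|a₂|`. Subtracting them gives `4 (1 + 2λ) (a₃ - a₂²) = τ (b₂ - c₂)`, hence
`|a₃| ≤ |a₂|² + |τ| / (2 (1 + 2λ))`.
-/

open Filter Topology Metric Set ComplexConjugate

section Leibniz

variable {𝕜 : Type*} [NontriviallyNormedField 𝕜] {f g h : 𝕜 → 𝕜} {x : 𝕜}

lemma iteratedDeriv_fun_id_mul_zero (n : ℕ) (hf : ContDiffAt 𝕜 (n + 1 : ℕ) f 0) :
    iteratedDeriv (n + 1) (fun y => y * f y) 0 = (n + 1) * iteratedDeriv n f 0 := by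
  rw [iteratedDeriv_fun_mul (f := fun y => y) contDiffAt_id hf, Finset.sum_range_succ',
    Finset.sum_range_succ']
  simp [iteratedDeriv_fun_id_zero]

lemma iteratedDeriv_two_fun_mul (hf : ContDiffAt 𝕜 2 f x) (hg : ContDiffAt 𝕜 2 g x) :
    iteratedDeriv 2 (fun y => f y * g y) x =
      iteratedDeriv 2 f x * g x + 2 * (deriv f x * deriv g x) + f x * iteratedDeriv 2 g x := by
  rw [iteratedDeriv_fun_mul hf hg]
  simp [Finset.sum_range_succ]
  ring

lemma iteratedDeriv_three_fun_mul (hf : ContDiffAt 𝕜 3 f x) (hg : ContDiffAt 𝕜 3 g x) :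
    iteratedDeriv 3 (fun y => f y * g y) x =
      iteratedDeriv 3 f x * g x + 3 * (iteratedDeriv 2 f x * deriv g x)
        + 3 * (deriv f x * iteratedDeriv 2 g x) + f x * iteratedDeriv 3 g x := by
  rw [iteratedDeriv_fun_mul hf hg]
  simp [Finset.sum_range_succ]
  ring

variable [CompleteSpace 𝕜]

lemma deriv_comp_eventuallyEq (hh : AnalyticAt 𝕜 h (f x)) (hf : AnalyticAt 𝕜 f x) :
    deriv (fun y => h (f y)) =ᶠ[𝓝 x] fun y => deriv h (f y) * deriv f y := by
  filter_upwards [hf.continuousAt.eventually hh.eventually_analyticAt, hf.eventually_analyticAt]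
    with y hhy hfy
  exact deriv_comp y hhy.differentiableAt hfy.differentiableAt

lemma iteratedDeriv_two_comp (hh : AnalyticAt 𝕜 h (f x)) (hf : AnalyticAt 𝕜 f x) :
    iteratedDeriv 2 (fun y => h (f y)) x =
      iteratedDeriv 2 h (f x) * deriv f x ^ 2 + deriv h (f x) * iteratedDeriv 2 f x := by
  simp only [iteratedDeriv_succ, iteratedDeriv_zero]
  rw [(deriv_comp_eventuallyEq hh hf).deriv_eq,
    deriv_fun_mul (hh.deriv.fun_comp hf).differentiableAt hf.deriv.differentiableAt,
    (deriv_comp_eventuallyEq hh.deriv hf).eq_of_nhds]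
  ring

lemma iteratedDeriv_three_comp (hh : AnalyticAt 𝕜 h (f x)) (hf : AnalyticAt 𝕜 f x) :
    iteratedDeriv 3 (fun y => h (f y)) x =
      iteratedDeriv 3 h (f x) * deriv f x ^ 3
        + 3 * (iteratedDeriv 2 h (f x) * deriv f x * iteratedDeriv 2 f x)
        + deriv h (f x) * iteratedDeriv 3 f x := by
  rw [iteratedDeriv_succ', (deriv_comp_eventuallyEq hh hf).iteratedDeriv_eq,
    iteratedDeriv_two_fun_mul (hh.deriv.fun_comp hf).contDiffAt hf.deriv.contDiffAt,
    iteratedDeriv_two_comp hh.deriv hf, (deriv_comp_eventuallyEq hh.deriv hf).eq_of_nhds]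
  simp only [← iteratedDeriv_succ']
  simp only [iteratedDeriv_succ, iteratedDeriv_zero]
  ring

lemma taylorCoeffs_of_leftInverse [CharZero 𝕜] (hf : AnalyticAt 𝕜 f x)
    (hg : AnalyticAt 𝕜 g (f x)) (hf1 : deriv f x = 1) (hgf : ∀ᶠ y in 𝓝 x, g (f y) = y) :
    deriv g (f x) = 1 ∧ iteratedDeriv 2 g (f x) / 2 = -(iteratedDeriv 2 f x / 2) ∧
      iteratedDeriv 3 g (f x) / 6 =
        2 * (iteratedDeriv 2 f x / 2) ^ 2 - iteratedDeriv 3 f x / 6 := by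
  have hgf' : (fun y => g (f y)) =ᶠ[𝓝 x] fun y => y := hgf
  have h1 := ((deriv_comp_eventuallyEq hg hf).symm.trans hgf'.deriv).eq_of_nhds
  have h2 := hgf'.iteratedDeriv_eq 2
  have h3 := hgf'.iteratedDeriv_eq 3
  rw [iteratedDeriv_two_comp hg hf] at h2
  rw [iteratedDeriv_three_comp hg hf] at h3
  norm_num [hf1, iteratedDeriv_fun_id] at h1 h2 h3
  rw [h1] at h2 h3
  refine ⟨h1, ?_, ?_⟩
  · linear_combination h2 / 2
  · linear_combination (h3 - 3 * iteratedDeriv 2 f x * h2) / 6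

end Leibniz

section Interpolation

variable {𝕜 : Type*} [NontriviallyNormedField 𝕜] [CompleteSpace 𝕜] {f : 𝕜 → 𝕜}

/-- `interpNum λ f / interpDen λ f` is `z f' / f` for `λ = 0` and `1 + z f'' / f'` for `λ = 1`. -/
noncomputable def interpNum (lam : 𝕜) (f : 𝕜 → 𝕜) (z : 𝕜) : 𝕜 :=
  z * deriv f z + lam * z ^ 2 * iteratedDeriv 2 f z

noncomputable def interpDen (lam : 𝕜) (f : 𝕜 → 𝕜) (z : 𝕜) : 𝕜 :=
  (1 - lam) * f z + lam * z * deriv f z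

lemma iteratedDeriv_succ_interpDen_zero (lam : 𝕜) (n : ℕ) (hf : AnalyticAt 𝕜 f 0) :
    iteratedDeriv (n + 1) (interpDen lam f) 0 = (1 + lam * n) * iteratedDeriv (n + 1) f 0 := by
  have hf' : AnalyticAt 𝕜 (fun z => z * deriv f z) 0 := by fun_prop
  have hsplit : interpDen lam f = fun z => (1 - lam) * f z + lam * (z * deriv f z) := by
    funext z; simp only [interpDen]; ring
  rw [hsplit, iteratedDeriv_fun_add (analyticAt_const.fun_mul hf).contDiffAt
      (analyticAt_const.fun_mul hf').contDiffAt,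
    iteratedDeriv_const_mul _ hf.contDiffAt, iteratedDeriv_const_mul _ hf'.contDiffAt,
    iteratedDeriv_fun_id_mul_zero n hf.deriv.contDiffAt, ← iteratedDeriv_succ']
  ring

lemma iteratedDeriv_succ_interpNum_zero (lam : 𝕜) (n : ℕ) (hf : AnalyticAt 𝕜 f 0) :
    iteratedDeriv (n + 1) (interpNum lam f) 0 =
      (n + 1) * (1 + lam * n) * iteratedDeriv (n + 1) f 0 := by
  have hf2 : AnalyticAt 𝕜 (iteratedDeriv 2 f) 0 := by
    rw [iteratedDeriv_eq_iterate]; exact hf.iterated_deriv 2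
  have hzf2 : AnalyticAt 𝕜 (fun z => z * iteratedDeriv 2 f z) 0 := by fun_prop
  have hzf2n : iteratedDeriv n (fun z => z * iteratedDeriv 2 f z) 0 =
      n * iteratedDeriv (n + 1) f 0 := by
    cases n with
    | zero => simp
    | succ m =>
      rw [iteratedDeriv_fun_id_mul_zero m hf2.contDiffAt, iteratedDeriv_eq_iterate,
        iteratedDeriv_eq_iterate, iteratedDeriv_eq_iterate, ← Function.iterate_add_apply]
      push_cast; ring
  have hrest : AnalyticAt 𝕜 (fun z => lam * (z * iteratedDeriv 2 f z)) 0 := by fun_prop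
  have hsplit : interpNum lam f = fun z => z * (deriv f z + lam * (z * iteratedDeriv 2 f z)) := by
    funext z; simp only [interpNum]; ring
  rw [hsplit, iteratedDeriv_fun_id_mul_zero n (hf.deriv.fun_add hrest).contDiffAt,
    iteratedDeriv_fun_add hf.deriv.contDiffAt hrest.contDiffAt,
    iteratedDeriv_const_mul _ hzf2.contDiffAt, hzf2n, ← iteratedDeriv_succ']
  ring

lemma coeff_relations_of_interp_quotient_eq {lam : 𝕜} {P : 𝕜 → 𝕜}
    (hf : AnalyticAt 𝕜 f 0) (hP : AnalyticAt 𝕜 P 0) (hf0 : f 0 = 0) (hf1 : deriv f 0 = 1)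
    (hfP : ∀ᶠ z in 𝓝[≠] 0, interpNum lam f z / interpDen lam f z = P z) :
    (1 + lam) * iteratedDeriv 2 f 0 = 2 * deriv P 0 ∧
      2 * (1 + 2 * lam) * iteratedDeriv 3 f 0 =
        3 * (1 + lam) * iteratedDeriv 2 f 0 * deriv P 0 + 3 * iteratedDeriv 2 P 0 := by
  set N := interpNum lam f
  set D := interpDen lam f
  have hDa : AnalyticAt 𝕜 D 0 := by unfold D interpDen; fun_prop
  have hD0 : D 0 = 0 := by simp [D, interpDen, hf0]
  have hD1 : deriv D 0 = 1 := by
    simpa [hf1] using iteratedDeriv_succ_interpDen_zero lam 0 hf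
  have hNDP : N =ᶠ[𝓝 0] fun z => D z * P z := by
    have hDne : ∀ᶠ z in 𝓝[≠] 0, D z ≠ 0 :=
      (hD1 ▸ hDa.differentiableAt.hasDerivAt).eventually_ne one_ne_zero
    rw [← nhdsNE_sup_pure, EventuallyEq, eventually_sup, eventually_pure]
    refine ⟨?_, by simp [N, D, interpNum, interpDen, hf0]⟩
    filter_upwards [hfP, hDne] with z hz hne
    rw [← hz]
    exact (mul_div_cancel₀ (N z) hne).symm
  have h1 := hNDP.iteratedDeriv_eq 1
  have h2 := hNDP.iteratedDeriv_eq 2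
  have h3 := hNDP.iteratedDeriv_eq 3
  rw [iteratedDeriv_succ_interpNum_zero lam 0 hf, iteratedDeriv_one, iteratedDeriv_one,
    deriv_fun_mul hDa.differentiableAt hP.differentiableAt] at h1
  rw [iteratedDeriv_succ_interpNum_zero lam 1 hf,
    iteratedDeriv_two_fun_mul hDa.contDiffAt hP.contDiffAt,
    iteratedDeriv_succ_interpDen_zero lam 1 hf] at h2
  rw [iteratedDeriv_succ_interpNum_zero lam 2 hf,
    iteratedDeriv_three_fun_mul hDa.contDiffAt hP.contDiffAt,
    iteratedDeriv_succ_interpDen_zero lam 1 hf, iteratedDeriv_succ_interpDen_zero lam 2 hf] at h3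
  simp only [hf1, hD0, hD1] at h1 h2 h3
  push_cast at h1 h2 h3
  have hP0 : P 0 = 1 := by linear_combination -h1
  rw [hP0] at h2 h3
  exact ⟨by linear_combination h2, by linear_combination h3⟩

end Interpolation

section ShellLike

variable {𝕜 : Type*} [NontriviallyNormedField 𝕜]

def shellLike (c z : 𝕜) : 𝕜 := (1 + c ^ 2 * z ^ 2) / (1 - c * z - c ^ 2 * z ^ 2)

@[simp] lemma shellLike_zero (c : 𝕜) : shellLike c 0 = 1 := by simp [shellLike]

lemma analyticAt_shellLike (c : 𝕜) : AnalyticAt 𝕜 (shellLike c) 0 := by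
  unfold shellLike
  fun_prop (disch := simp)

lemma shellLike_derivs_zero [CompleteSpace 𝕜] (c : 𝕜) :
    deriv (shellLike c) 0 = c ∧ iteratedDeriv 2 (shellLike c) 0 = 6 * c ^ 2 := by
  set q : 𝕜 → 𝕜 := fun z => 1 - c * z - c ^ 2 * z ^ 2 with hq
  have hq' : deriv q = fun z => -c - 2 * c ^ 2 * z := by
    ext z; simp (disch := fun_prop) [hq, deriv_fun_sub]; ring
  have hqp : (fun z => q z * shellLike c z) =ᶠ[𝓝 0] fun z => 1 + c ^ 2 * z ^ 2 := by
    have hq0 : ∀ᶠ z in 𝓝 (0 : 𝕜), q z ≠ 0 :=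
      (by fun_prop : Continuous q).continuousAt.eventually_ne (by simp [hq])
    filter_upwards [hq0] with z hz
    exact mul_div_cancel₀ _ hz
  have hqa : AnalyticAt 𝕜 q 0 := by fun_prop
  have h1 := hqp.deriv_eq
  have h2 := hqp.iteratedDeriv_eq 2
  rw [deriv_fun_mul hqa.differentiableAt (analyticAt_shellLike c).differentiableAt] at h1
  rw [iteratedDeriv_two_fun_mul hqa.contDiffAt (analyticAt_shellLike c).contDiffAt] at h2
  simp (disch := fun_prop) [iteratedDeriv_succ, hq'] at h1 h2
  have hq0 : q 0 = 1 := by simp [hq]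
  rw [hq0] at h1 h2
  have hp1 : deriv (shellLike c) 0 = c := by linear_combination h1
  refine ⟨hp1, ?_⟩
  rw [hp1] at h2
  simp only [iteratedDeriv_succ, iteratedDeriv_zero]
  linear_combination h2

end ShellLike

section Schwarz

lemma norm_sub_lt_norm_one_sub_conj_mul {a u : ℂ} (ha : ‖a‖ < 1) (hu : ‖u‖ < 1) :
    ‖u - a‖ < ‖1 - conj a * u‖ := by
  have key : ‖1 - conj a * u‖ ^ 2 - ‖u - a‖ ^ 2 =
      (1 - ‖a‖ ^ 2) * (1 - ‖u‖ ^ 2) := by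
    simp only [Complex.sq_norm, Complex.normSq_apply, Complex.sub_re, Complex.sub_im,
      Complex.mul_re, Complex.mul_im, Complex.conj_re, Complex.conj_im, Complex.one_re,
      Complex.one_im]
    ring
  have hpos : 0 < (1 - ‖a‖ ^ 2) * (1 - ‖u‖ ^ 2) := by
    apply mul_pos <;> nlinarith [norm_nonneg a, norm_nonneg u]
  exact lt_of_pow_lt_pow_left₀ 2 (norm_nonneg _) (by linarith)

lemma norm_deriv_zero_le_of_mapsTo_ball {φ : ℂ → ℂ}
    (hφ : DifferentiableOn ℂ φ (ball 0 1)) (hmaps : MapsTo φ (ball 0 1) (ball 0 1)) :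
    ‖deriv φ 0‖ ≤ 1 - ‖φ 0‖ ^ 2 := by
  set a := φ 0 with ha_def
  have h0 : (0 : ℂ) ∈ ball (0 : ℂ) 1 := mem_ball_self one_pos
  have ha : ‖a‖ < 1 := mem_ball_zero_iff.mp (hmaps h0)
  have hden : ∀ z ∈ ball (0 : ℂ) 1, 1 - conj a * φ z ≠ 0 := by
    intro z hz h
    have : ‖conj a * φ z‖ < 1 := by
      rw [norm_mul, Complex.norm_conj]
      exact mul_lt_one_of_nonneg_of_lt_one_left (norm_nonneg a) ha
        (mem_ball_zero_iff.mp (hmaps hz)).le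
    rw [← sub_eq_zero.mp h, norm_one] at this
    exact this.false
  set ψ : ℂ → ℂ := fun z => (φ z - a) / (1 - conj a * φ z)
  have hψ : DifferentiableOn ℂ ψ (ball 0 1) :=
    (hφ.sub_const a).div ((differentiableOn_const 1).sub (hφ.const_mul _)) hden
  have hψmaps : MapsTo ψ (ball 0 1) (closedBall (ψ 0) 1) := by
    intro z hz
    simp only [ψ, ← ha_def, sub_self, zero_div, mem_closedBall_zero_iff, norm_div]
    exact (div_lt_one (norm_pos_iff.mpr (hden z hz))).mpr
      (norm_sub_lt_norm_one_sub_conj_mul ha (mem_ball_zero_iff.mp (hmaps hz))) |>.le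
  have hφ0 : DifferentiableAt ℂ φ 0 := hφ.differentiableAt (isOpen_ball.mem_nhds h0)
  have hψ' : deriv ψ 0 = deriv φ 0 / (1 - ‖a‖ ^ 2 : ℝ) := by
    rw [deriv_fun_div (hφ0.sub_const a) ((hφ0.const_mul _).const_sub 1) (hden 0 h0)]
    simp only [deriv_sub_const, deriv_const_sub, deriv_const_mul _ hφ0, ← ha_def, sub_self,
      Complex.conj_mul']
    have hden0 : (1 : ℂ) - ‖a‖ ^ 2 ≠ 0 := by
      simpa [← ha_def, Complex.conj_mul'] using hden 0 h0
    push_cast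
    field_simp
    ring
  have := Complex.norm_deriv_le_one_of_mapsTo_ball hψ hψmaps one_pos
  rw [hψ', norm_div, Complex.norm_real, Real.norm_of_nonneg (by nlinarith [norm_nonneg a]),
    div_le_one (by nlinarith [norm_nonneg a])] at this
  exact this

lemma norm_deriv_zero_le_of_mapsTo_closedBall {φ : ℂ → ℂ}
    (hφ : DifferentiableOn ℂ φ (ball 0 1)) (hmaps : MapsTo φ (ball 0 1) (closedBall 0 1)) :
    ‖deriv φ 0‖ ≤ 1 - ‖φ 0‖ ^ 2 := by
  by_cases hopen : MapsTo φ (ball 0 1) (ball 0 1)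
  · exact norm_deriv_zero_le_of_mapsTo_ball hφ hopen
  -- Otherwise `‖φ‖` attains its maximum `1` inside the disc, so `φ` is a unimodular constant.
  obtain ⟨z₁, hz₁, hφz₁⟩ : ∃ z₁ ∈ ball (0 : ℂ) 1, ‖φ z₁‖ = 1 := by
    obtain ⟨z₁, hz₁, h⟩ := not_forall₂.mp hopen
    refine ⟨z₁, hz₁, le_antisymm (mem_closedBall_zero_iff.mp (hmaps hz₁)) ?_⟩
    simpa using h
  have hmax : IsMaxOn (norm ∘ φ) (ball 0 1) z₁ := fun z hz => by
    simpa [hφz₁] using mem_closedBall_zero_iff.mp (hmaps hz)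
  have hconst := Complex.eqOn_of_isPreconnected_of_isMaxOn_norm
    (convex_ball (0 : ℂ) 1).isPreconnected isOpen_ball hφ hz₁ hmax
  have h0 : (0 : ℂ) ∈ ball (0 : ℂ) 1 := mem_ball_self one_pos
  have hderiv : deriv φ 0 = 0 := by
    rw [(hconst.eventuallyEq_of_mem (isOpen_ball.mem_nhds h0)).deriv_eq]
    exact deriv_const 0 _
  simp [hderiv, hconst h0, hφz₁]

lemma norm_secondCoeff_le_of_schwarz {w : ℂ → ℂ} (hw : DifferentiableOn ℂ w (ball 0 1))
    (hw0 : w 0 = 0) (hmaps : MapsTo w (ball 0 1) (ball 0 1)) :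
    ‖iteratedDeriv 2 w 0 / 2‖ ≤ 1 - ‖deriv w 0‖ ^ 2 := by
  have h0 : (0 : ℂ) ∈ ball (0 : ℂ) 1 := mem_ball_self one_pos
  set φ := dslope w 0
  have hφ : DifferentiableOn ℂ φ (ball 0 1) :=
    (Complex.differentiableOn_dslope (isOpen_ball.mem_nhds h0)).mpr hw
  have hφmaps : MapsTo φ (ball 0 1) (closedBall 0 1) := fun z hz => by
    simpa using Complex.norm_dslope_le_div_of_mapsTo_ball hw
      (by simpa [hw0] using hmaps.mono_right ball_subset_closedBall) hz
  have hw' : w = fun z => z * φ z := by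
    funext z; simpa [hw0] using (sub_smul_dslope w 0 z).symm
  have hw2 : iteratedDeriv 2 w 0 / 2 = deriv φ 0 := by
    rw [hw', iteratedDeriv_fun_id_mul_zero 1
      ((hφ.analyticAt (isOpen_ball.mem_nhds h0)).contDiffAt)]
    simp only [iteratedDeriv_one]
    ring
  have hw1 : deriv w 0 = φ 0 := (dslope_same w 0).symm
  rw [hw2, hw1]
  exact norm_deriv_zero_le_of_mapsTo_closedBall hφ hφmaps

end Schwarz

lemma coeff_relations_of_subordinate_shellLike {lam c : ℂ} {f w : ℂ → ℂ}
    (hf : AnalyticAt ℂ f 0) (hf0 : f 0 = 0) (hf1 : deriv f 0 = 1)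
    (hw : AnalyticOnNhd ℂ w (ball 0 1)) (hw0 : w 0 = 0)
    (hwb : ∀ z ∈ ball (0 : ℂ) 1, ‖w z‖ < 1)
    (hfw : ∀ z ∈ ball (0 : ℂ) 1, z ≠ 0 →
      interpNum lam f z / interpDen lam f z = shellLike c (w z)) :
    ∃ b1 b2 : ℂ, ‖b2‖ ≤ 1 - ‖b1‖ ^ 2 ∧
      (1 + lam) * (iteratedDeriv 2 f 0 / 2) = c * b1 ∧
      2 * (1 + 2 * lam) * (iteratedDeriv 3 f 0 / 6) = 4 * c ^ 2 * b1 ^ 2 + c * b2 := by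
  have h0 : (0 : ℂ) ∈ ball (0 : ℂ) 1 := mem_ball_self one_pos
  have hwa : AnalyticAt ℂ w 0 := hw 0 h0
  have hpa : AnalyticAt ℂ (shellLike c) (w 0) := by rw [hw0]; exact analyticAt_shellLike c
  obtain ⟨hp1, hp2⟩ := shellLike_derivs_zero c
  have hP1 : deriv (fun z => shellLike c (w z)) 0 = c * deriv w 0 := by
    rw [(deriv_comp_eventuallyEq hpa hwa).eq_of_nhds, hw0, hp1]
  have hP2 : iteratedDeriv 2 (fun z => shellLike c (w z)) 0 =
      6 * c ^ 2 * deriv w 0 ^ 2 + c * iteratedDeriv 2 w 0 := by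
    rw [iteratedDeriv_two_comp hpa hwa, hw0, hp1, hp2]
  have hfw' : ∀ᶠ z in 𝓝[≠] 0,
      interpNum lam f z / interpDen lam f z = shellLike c (w z) := by
    filter_upwards [self_mem_nhdsWithin, nhdsWithin_le_nhds (ball_mem_nhds 0 one_pos)]
      with z hz0 hz using hfw z hz hz0
  obtain ⟨h2, h3⟩ := coeff_relations_of_interp_quotient_eq hf (hpa.fun_comp hwa) hf0 hf1 hfw'
  rw [hP1] at h2 h3
  rw [hP2] at h3
  refine ⟨deriv w 0, iteratedDeriv 2 w 0 / 2,
    norm_secondCoeff_le_of_schwarz hw.differentiableOn hw0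
      (fun z hz => mem_ball_zero_iff.mpr (hwb z hz)),
    by linear_combination h2 / 2, by linear_combination h3 / 6 + c * deriv w 0 / 2 * h2⟩

lemma bi_coeff_norm_bounds {lam : ℝ} (hlam : 0 ≤ lam) {t a2 a3 b1 b2 c1 c2 : ℂ}
    (hb : ‖b2‖ ≤ 1 - ‖b1‖ ^ 2) (hc : ‖c2‖ ≤ 1 - ‖c1‖ ^ 2)
    (hfb1 : (1 + lam) * a2 = t * b1)
    (hfb2 : 2 * (1 + 2 * lam) * a3 = 4 * t ^ 2 * b1 ^ 2 + t * b2)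
    (hgc1 : (1 + lam) * -a2 = t * c1)
    (hgc2 : 2 * (1 + 2 * lam) * (2 * a2 ^ 2 - a3) = 4 * t ^ 2 * c1 ^ 2 + t * c2) :
    ‖a2‖ ^ 2 * ((1 + lam) ^ 2 + 2 * ‖t‖ * (2 * lam ^ 2 + 2 * lam + 1)) ≤ ‖t‖ ^ 2 ∧
      ‖a3‖ ≤ ‖a2‖ ^ 2 + ‖t‖ / (2 * (1 + 2 * lam)) := by
  have hsum : -4 * (2 * lam ^ 2 + 2 * lam + 1) * a2 ^ 2 = t * (b2 + c2) := by
    linear_combination hfb2 + hgc2 - 4 * (t * b1 + (1 + lam) * a2) * hfb1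
      - 4 * (t * c1 - (1 + lam) * a2) * hgc1
  have hdiff : 4 * (1 + 2 * lam) * (a3 - a2 ^ 2) = t * (b2 - c2) := by
    linear_combination hfb2 - hgc2 - 4 * (t * b1 + (1 + lam) * a2) * hfb1
      + 4 * (t * c1 - (1 + lam) * a2) * hgc1
  have hm : ‖(2 * lam ^ 2 + 2 * lam + 1 : ℂ)‖ = 2 * lam ^ 2 + 2 * lam + 1 := by
    exact_mod_cast Complex.norm_of_nonneg (by positivity)
  have hl1 : ‖(1 + lam : ℂ)‖ = 1 + lam := by
    exact_mod_cast Complex.norm_of_nonneg (by positivity)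
  have hl2 : ‖(1 + 2 * lam : ℂ)‖ = 1 + 2 * lam := by
    exact_mod_cast Complex.norm_of_nonneg (by positivity)
  have hnb1 : (1 + lam) * ‖a2‖ = ‖t‖ * ‖b1‖ := by
    simpa [hl1] using congrArg norm hfb1
  have hnc1 : (1 + lam) * ‖a2‖ = ‖t‖ * ‖c1‖ := by
    simpa [hl1] using congrArg norm hgc1
  have hnsum :
      4 * (2 * lam ^ 2 + 2 * lam + 1) * ‖a2‖ ^ 2 ≤ ‖t‖ * (‖b2‖ + ‖c2‖) := by
    have := congrArg norm hsum
    simp only [norm_mul, norm_neg, norm_pow, hm] at this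
    norm_num at this
    rw [this]
    exact mul_le_mul_of_nonneg_left (norm_add_le _ _) (norm_nonneg _)
  have hndiff : 4 * (1 + 2 * lam) * ‖a3 - a2 ^ 2‖ ≤ ‖t‖ * (‖b2‖ + ‖c2‖) := by
    have := congrArg norm hdiff
    simp only [norm_mul, hl2] at this
    norm_num at this
    rw [this]
    exact mul_le_mul_of_nonneg_left (norm_sub_le _ _) (norm_nonneg _)
  have hbc : ‖b2‖ + ‖c2‖ ≤ 2 - ‖b1‖ ^ 2 - ‖c1‖ ^ 2 := by linarith
  constructor
  · have := mul_le_mul_of_nonneg_left (hnsum.trans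
      (mul_le_mul_of_nonneg_left hbc (norm_nonneg t))) (norm_nonneg t)
    nlinarith [congrArg (· ^ 2) hnb1, congrArg (· ^ 2) hnc1]
  · have hpos : 0 < 2 * (1 + 2 * lam) := by positivity
    have : ‖a3 - a2 ^ 2‖ ≤ ‖t‖ / (2 * (1 + 2 * lam)) := by
      rw [le_div_iff₀ hpos]
      nlinarith [norm_nonneg t, sq_nonneg ‖b1‖, sq_nonneg ‖c1‖]
    have htri := norm_add_le (a3 - a2 ^ 2) (a2 ^ 2)
    rw [sub_add_cancel, norm_pow] at htri
    linarith

lemma bi_coeff_bounds {τ lam : ℝ} (hτ : τ < 0) (hlam : 0 ≤ lam) {a2 a3 b1 b2 c1 c2 : ℂ}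
    (hb : ‖b2‖ ≤ 1 - ‖b1‖ ^ 2) (hc : ‖c2‖ ≤ 1 - ‖c1‖ ^ 2)
    (hfb1 : (1 + lam) * a2 = τ * b1)
    (hfb2 : 2 * (1 + 2 * lam) * a3 = 4 * τ ^ 2 * b1 ^ 2 + τ * b2)
    (hgc1 : (1 + lam) * -a2 = τ * c1)
    (hgc2 : 2 * (1 + 2 * lam) * (2 * a2 ^ 2 - a3) = 4 * τ ^ 2 * c1 ^ 2 + τ * c2) :
    ‖a2‖ ≤ |τ| / Real.sqrt ((1 + lam) ^ 2 - 2 * τ * (2 * lam ^ 2 + 2 * lam + 1)) ∧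
    ‖a3‖ ≤ |τ| * (1 - 4 * τ) * (1 + lam) ^ 2 /
        (2 * (1 + 2 * lam) * ((1 + lam) ^ 2 - 2 * τ * (2 * lam ^ 2 + 2 * lam + 1))) := by
  obtain ⟨h2, h3⟩ := bi_coeff_norm_bounds hlam hb hc hfb1 hfb2 hgc1 hgc2
  set Δ := (1 + lam) ^ 2 - 2 * τ * (2 * lam ^ 2 + 2 * lam + 1)
  rw [Complex.norm_real, Real.norm_eq_abs, abs_of_neg hτ] at h2 h3
  rw [abs_of_neg hτ]
  have hΔ : 0 < Δ := by nlinarith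
  have ha2 : ‖a2‖ ^ 2 * Δ ≤ τ ^ 2 := by nlinarith
  constructor
  · rw [le_div_iff₀ (Real.sqrt_pos.mpr hΔ)]
    refine le_of_pow_le_pow_left₀ two_ne_zero (by linarith) ?_
    rw [mul_pow, Real.sq_sqrt hΔ.le]
    linarith
  · calc ‖a3‖ ≤ τ ^ 2 / Δ + -τ / (2 * (1 + 2 * lam)) := by
          rw [← le_div_iff₀ hΔ] at ha2; linarith
      _ = _ := by field_simp; ring

theorem PSL_coeff_bounds_general (τ : ℝ) (hτ : τ = (1 - Real.sqrt 5) / 2)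
    (lam : ℝ) (hlam0 : 0 ≤ lam)
    (f g : ℂ → ℂ)
    (hf : AnalyticOnNhd ℂ f (Metric.ball 0 1))
    (hf0 : f 0 = 0) (hf1 : deriv f 0 = 1)
    (hg : AnalyticOnNhd ℂ g (Metric.ball 0 1))
    (hg0 : g 0 = 0)
    (hgf : ∀ z ∈ Metric.ball (0 : ℂ) 1, f z ∈ Metric.ball (0 : ℂ) 1 → g (f z) = z)
    (p : ℂ → ℂ)
    (hp : ∀ z : ℂ, p z =
      (1 + (τ : ℂ) ^ 2 * z ^ 2) / (1 - (τ : ℂ) * z - (τ : ℂ) ^ 2 * z ^ 2))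
    (hsubf : ∃ w : ℂ → ℂ, AnalyticOnNhd ℂ w (Metric.ball 0 1) ∧ w 0 = 0 ∧
      (∀ z ∈ Metric.ball (0 : ℂ) 1, ‖w z‖ < 1) ∧
      ∀ z ∈ Metric.ball (0 : ℂ) 1, z ≠ 0 →
        (z * deriv f z + (lam : ℂ) * z ^ 2 * iteratedDeriv 2 f z) /
          ((1 - (lam : ℂ)) * f z + (lam : ℂ) * z * deriv f z) = p (w z))
    (hsubg : ∃ w : ℂ → ℂ, AnalyticOnNhd ℂ w (Metric.ball 0 1) ∧ w 0 = 0 ∧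
      (∀ z ∈ Metric.ball (0 : ℂ) 1, ‖w z‖ < 1) ∧
      ∀ z ∈ Metric.ball (0 : ℂ) 1, z ≠ 0 →
        (z * deriv g z + (lam : ℂ) * z ^ 2 * iteratedDeriv 2 g z) /
          ((1 - (lam : ℂ)) * g z + (lam : ℂ) * z * deriv g z) = p (w z)) :
    ‖iteratedDeriv 2 f 0 / 2‖ ≤
      |τ| / Real.sqrt ((1 + lam) ^ 2 - 2 * τ * (2 * lam ^ 2 + 2 * lam + 1)) ∧
    ‖iteratedDeriv 3 f 0 / 6‖ ≤
      |τ| * (1 - 4 * τ) * (1 + lam) ^ 2 /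
        (2 * (1 + 2 * lam) * ((1 + lam) ^ 2 - 2 * τ * (2 * lam ^ 2 + 2 * lam + 1))) := by
  have hτ0 : τ < 0 := by
    rw [hτ]; linarith [(Real.lt_sqrt zero_le_one).mpr (by norm_num : (1 : ℝ) ^ 2 < 5)]
  obtain rfl : p = shellLike (τ : ℂ) := funext hp
  obtain ⟨w, hw, hw0, hwb, hfw⟩ := hsubf
  obtain ⟨v, hv, hv0, hvb, hgv⟩ := hsubg
  have h0 : (0 : ℂ) ∈ ball (0 : ℂ) 1 := mem_ball_self one_pos
  have hgf' : ∀ᶠ z in 𝓝 0, g (f z) = z := by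
    filter_upwards [ball_mem_nhds (0 : ℂ) one_pos,
      (hf 0 h0).continuousAt.preimage_mem_nhds (by rw [hf0]; exact ball_mem_nhds (0 : ℂ) one_pos)]
      with z hz hfz using hgf z hz hfz
  obtain ⟨hg1, hA2, hA3⟩ :=
    taylorCoeffs_of_leftInverse (hf 0 h0) (by rw [hf0]; exact hg 0 h0) hf1 hgf'
  rw [hf0] at hg1 hA2 hA3
  obtain ⟨b1, b2, hb, hfb1, hfb2⟩ :=
    coeff_relations_of_subordinate_shellLike (hf 0 h0) hf0 hf1 hw hw0 hwb hfw
  obtain ⟨c1, c2, hc, hgc1, hgc2⟩ :=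
    coeff_relations_of_subordinate_shellLike (hg 0 h0) hg0 hg1 hv hv0 hvb hgv
  rw [hA2] at hgc1
  rw [hA3] at hgc2
  exact bi_coeff_bounds hτ0 hlam0 hb hc hfb1 hfb2 hgc1 hgc2

theorem PSL_coeff_bounds (τ : ℝ) (hτ : τ = (1 - Real.sqrt 5) / 2)
    (lam : ℝ) (hlam0 : 0 ≤ lam) (hlam1 : lam ≤ 1)
    (f g : ℂ → ℂ)
    (hf : AnalyticOnNhd ℂ f (Metric.ball 0 1))
    (hfi : Set.InjOn f (Metric.ball 0 1))
    (hf0 : f 0 = 0) (hf1 : deriv f 0 = 1)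
    (hg : AnalyticOnNhd ℂ g (Metric.ball 0 1))
    (hgi : Set.InjOn g (Metric.ball 0 1)) (hg0 : g 0 = 0)
    (hgf : ∀ z ∈ Metric.ball (0 : ℂ) 1, f z ∈ Metric.ball (0 : ℂ) 1 → g (f z) = z)
    (hfg : ∀ w ∈ Metric.ball (0 : ℂ) 1, g w ∈ Metric.ball (0 : ℂ) 1 → f (g w) = w)
    (p : ℂ → ℂ)
    (hp : ∀ z : ℂ, p z =
      (1 + (τ : ℂ) ^ 2 * z ^ 2) / (1 - (τ : ℂ) * z - (τ : ℂ) ^ 2 * z ^ 2))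
    (hsubf : ∃ w : ℂ → ℂ, AnalyticOnNhd ℂ w (Metric.ball 0 1) ∧ w 0 = 0 ∧
      (∀ z ∈ Metric.ball (0 : ℂ) 1, ‖w z‖ < 1) ∧
      ∀ z ∈ Metric.ball (0 : ℂ) 1, z ≠ 0 →
        (z * deriv f z + (lam : ℂ) * z ^ 2 * iteratedDeriv 2 f z) /
          ((1 - (lam : ℂ)) * f z + (lam : ℂ) * z * deriv f z) = p (w z))
    (hsubg : ∃ w : ℂ → ℂ, AnalyticOnNhd ℂ w (Metric.ball 0 1) ∧ w 0 = 0 ∧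
      (∀ z ∈ Metric.ball (0 : ℂ) 1, ‖w z‖ < 1) ∧
      ∀ z ∈ Metric.ball (0 : ℂ) 1, z ≠ 0 →
        (z * deriv g z + (lam : ℂ) * z ^ 2 * iteratedDeriv 2 g z) /
          ((1 - (lam : ℂ)) * g z + (lam : ℂ) * z * deriv g z) = p (w z)) :
    ‖iteratedDeriv 2 f 0 / 2‖ ≤
      |τ| / Real.sqrt ((1 + lam) ^ 2 - 2 * τ * (2 * lam ^ 2 + 2 * lam + 1)) ∧
    ‖iteratedDeriv 3 f 0 / 6‖ ≤
      |τ| * (1 - 4 * τ) * (1 + lam) ^ 2 /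
        (2 * (1 + 2 * lam) * ((1 + lam) ^ 2 - 2 * τ * (2 * lam ^ 2 + 2 * lam + 1))) :=
  PSL_coeff_bounds_general τ hτ lam hlam0 f g hf hf0 hf1 hg hg0 hgf p hp hsubf hsubg
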